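/- Let U be an open set of d×d complex matrices, let f : U → ℝ be differentiable with Hermitian gradient f', let ρ ∈ U be a nonsingular density matrix, let α > 0 and τ ∈ (0,1], and set ρ(α) := ρ_{f'(ρ)}(α); assume ρ(α) ∈ U. If the Armijo condition f(ρ(α)) ≤ f(ρ) + τ · Re⟨f'(ρ), ρ(α) − ρ⟩ holds, then f(ρ) − f(ρ(α)) ≥ τ α⁻¹ D(ρ(α), ρ) ≥ 0; in particular f(ρ(α)) ≤ f(ρ). -/

import Mathlib

open scoped Matrix ComplexOrder

noncomputable section

/-- The space of `d × d` complex matrices. -/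
abbrev Mat (d : ℕ) := Matrix (Fin d) (Fin d) ℂ

/-- Matrix exponential of a Hermitian matrix, via the real continuous functional calculus
(i.e. the functional calculus on the eigenvalues). -/
noncomputable def mexp {d : ℕ} (A : Mat d) : Mat d := cfc Real.exp A

/-- Matrix logarithm of a positive definite Hermitian matrix, via the real continuous
functional calculus. -/
noncomputable def mlog {d : ℕ} (A : Mat d) : Mat d := cfc Real.log A

/-- A density matrix: Hermitian, positive semidefinite, trace one. -/
def IsDensity {d : ℕ} (ρ : Mat d) : Prop := ρ.PosSemidef ∧ ρ.trace = 1

/-- The real part of the Hilbert–Schmidt inner product `tr (Xᴴ Y)` (which is real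
when `X` and `Y` are Hermitian). -/
noncomputable def hsInner {d : ℕ} (X Y : Mat d) : ℝ := (Matrix.trace (Xᴴ * Y)).re

/-- `tr (σ log σ) = ∑ᵢ λᵢ log λᵢ` over the eigenvalues of `σ` (the convention
`0 log 0 = 0` matches `Real.log 0 = 0`), via the functional calculus for `x ↦ x log x`. -/
noncomputable def trEnt {d : ℕ} (σ : Mat d) : ℝ :=
  (Matrix.trace (cfc (fun x : ℝ => x * Real.log x) σ)).re

/-- The quantum relative entropy `D(σ, ρ) = tr (σ log σ) - tr (σ log ρ)` (for `σ` a
density matrix and `ρ` a nonsingular density matrix). -/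
noncomputable def qRelEnt {d : ℕ} (σ ρ : Mat d) : ℝ :=
  trEnt σ - (Matrix.trace (σ * mlog ρ)).re

/-- The exponentiated-gradient step `ρ_G(α) = c⁻¹ exp (log ρ - α G)` where
`c = tr exp (log ρ - α G)`. -/
noncomputable def egStep {d : ℕ} (ρ G : Mat d) (α : ℝ) : Mat d :=
  (Matrix.trace (mexp (mlog ρ - α • G)))⁻¹ • mexp (mlog ρ - α • G)

attribute [local instance] Matrix.frobeniusNormedAddCommGroup Matrix.frobeniusNormedSpace

lemma contOn_of_finite {s : Set ℝ} (hs : s.Finite) (f : ℝ → ℝ) : ContinuousOn f s := by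
  have : Finite s := hs.to_subtype
  rw [continuousOn_iff_continuous_restrict]
  exact continuous_of_discreteTopology

lemma contOn {d : ℕ} (f : ℝ → ℝ) (A : Mat d) : ContinuousOn f (spectrum ℝ A) :=
  contOn_of_finite A.finite_real_spectrum f

lemma trace_cfc' {d : ℕ} {A : Mat d} (hA : A.IsHermitian) (f : ℝ → ℝ) :
    (cfc f A).trace = ∑ i, (f (hA.eigenvalues i) : ℂ) := by
  rw [hA.cfc_eq, Matrix.IsHermitian.cfc, Unitary.conjStarAlgAut_apply,
    Matrix.trace_mul_cycle,
    Matrix.mem_unitaryGroup_iff'.mp (Matrix.IsHermitian.eigenvectorUnitary hA).2,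
    Matrix.one_mul, Matrix.trace_diagonal]
  rfl

lemma re_sum_ofReal {d : ℕ} (g : Fin d → ℝ) : (∑ i, (g i : ℂ)).re = ∑ i, g i := by
  rw [Complex.re_sum]
  simp

lemma posDef_conj {d : ℕ} {D : Mat d} (hD : D.PosDef) {B : Mat d}
    (hB : Function.Injective B.mulVec) : (Bᴴ * D * B).PosDef := by
  refine Matrix.PosDef.of_dotProduct_mulVec_pos (Matrix.isHermitian_conjTranspose_mul_mul B hD.1) fun x hx => ?_
  have hBx : B *ᵥ x ≠ 0 := fun h0 => hx (hB (h0.trans (B.mulVec_zero).symm))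
  have h := hD.dotProduct_mulVec_pos hBx
  simpa only [Matrix.star_mulVec, Matrix.dotProduct_mulVec, Matrix.vecMul_vecMul] using h

lemma cfc_posDef {d : ℕ} {A : Mat d} (hA : A.IsHermitian) (f : ℝ → ℝ)
    (hf : ∀ x, 0 < f x) : (cfc f A).PosDef := by
  rw [hA.cfc_eq, Matrix.IsHermitian.cfc]
  set U : Mat d := (Matrix.IsHermitian.eigenvectorUnitary hA : Mat d) with hU
  have hUU : U * star U = 1 :=
    Matrix.mem_unitaryGroup_iff.mp (Matrix.IsHermitian.eigenvectorUnitary hA).2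
  have hD : (Matrix.diagonal (RCLike.ofReal ∘ f ∘ hA.eigenvalues) : Mat d).PosDef :=
    Matrix.posDef_diagonal_iff.mpr fun i => by
      simp only [Function.comp_apply, RCLike.ofReal]
      exact Complex.zero_lt_real.mpr (hf _)
  have hinj : Function.Injective (star U).mulVec := by
    intro x y hxy
    have h2 := congrArg (U.mulVec) hxy
    rwa [Matrix.mulVec_mulVec, Matrix.mulVec_mulVec, hUU, Matrix.one_mulVec,
      Matrix.one_mulVec] at h2
  have h3 := posDef_conj hD hinj
  simpa [Matrix.star_eq_conjTranspose, Matrix.conjTranspose_conjTranspose] using h3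

lemma trEnt_eq {d : ℕ} {A : Mat d} (hA : A.IsHermitian) :
    trEnt A = (Matrix.trace (A * mlog A)).re := by
  rw [trEnt, mlog]
  congr 2
  rw [cfc_mul (R := ℝ) (fun x => x) Real.log A (contOn _ _) (contOn _ _),
    cfc_id' ℝ A hA.isSelfAdjoint]

lemma real_smul_mat {d : ℕ} (r : ℝ) (M : Mat d) : (↑r : ℂ) • M = r • M := by
  ext i j
  simp [Complex.real_smul]

lemma mlog_isHermitian {d : ℕ} (A : Mat d) : (mlog A).IsHermitian :=
  cfc_predicate Real.log A

lemma egStep_key {d : ℕ} (hd : 0 < d) (ρ G : Mat d) (hρ : ρ.PosDef) (hρ1 : ρ.trace = 1)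
    (hG : G.IsHermitian) (α : ℝ) :
    (egStep ρ G α).PosDef ∧ (egStep ρ G α).trace = 1 ∧
    qRelEnt (egStep ρ G α) ρ + qRelEnt ρ (egStep ρ G α)
      = α * ((Matrix.trace (ρ * G)).re - (Matrix.trace (egStep ρ G α * G)).re) := by
  have : Nonempty (Fin d) := ⟨⟨0, hd⟩⟩
  set H : Mat d := mlog ρ - α • G with hHdef
  have hαG : (α • G).IsHermitian := Matrix.IsHermitian.ext fun i j => by
    simp only [Matrix.smul_apply, Complex.real_smul, star_mul', RCLike.star_def,
      Complex.conj_ofReal, hG.apply]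
  have hH : H.IsHermitian := (mlog_isHermitian ρ).sub hαG
  set cR : ℝ := ∑ i, Real.exp (hH.eigenvalues i) with hcRdef
  have hcR : 0 < cR := Finset.sum_pos (fun i _ => Real.exp_pos _) Finset.univ_nonempty
  have hc : Matrix.trace (mexp H) = (cR : ℂ) := by
    rw [mexp, trace_cfc' hH, hcRdef]
    push_cast
    rfl
  have hσdef : egStep ρ G α = cR⁻¹ • mexp H := by
    rw [egStep, ← hHdef, hc, ← Complex.ofReal_inv, real_smul_mat]
  set σ : Mat d := egStep ρ G α with hσ
  have hσcfc : σ = cfc (fun t => cR⁻¹ * Real.exp t) H := by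
    rw [cfc_const_mul cR⁻¹ Real.exp H (contOn _ _), hσdef, mexp]
  have hσpos : σ.PosDef := by
    rw [hσcfc]
    exact cfc_posDef hH _ (fun t => mul_pos (inv_pos.2 hcR) (Real.exp_pos t))
  have hσtr : σ.trace = 1 := by
    rw [hσdef, Matrix.trace_smul, hc]
    simp [smul_eq_mul]
    rw [inv_mul_cancel₀]
    exact_mod_cast hcR.ne'
  have hσlog : mlog σ = H - (Real.log cR) • (1 : Mat d) := by
    rw [mlog, hσcfc, ← cfc_comp Real.log _ H hH.isSelfAdjoint
      (contOn_of_finite ((Matrix.finite_real_spectrum (A := H)).image _) _) (contOn _ H)]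
    have he : (Real.log ∘ fun t => cR⁻¹ * Real.exp t) = fun t => t + (-Real.log cR) := by
      funext t
      simp [Function.comp, Real.log_mul (inv_ne_zero hcR.ne') (Real.exp_ne_zero t),
        Real.log_inv, Real.log_exp]
      ring
    rw [he, cfc_add_const (-Real.log cR) (fun t => t) H (contOn _ _) hH.isSelfAdjoint,
      cfc_id' ℝ H hH.isSelfAdjoint, Algebra.algebraMap_eq_smul_one, neg_smul,
      ← sub_eq_add_neg]
  have htr : ∀ (X : Mat d), X.trace = 1 → ∀ (Y : Mat d) (s t : ℝ),
      (Matrix.trace (X * (s • Y + t • (1 : Mat d)))).re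
        = s * (Matrix.trace (X * Y)).re + t := by
    intro X hX Y s t
    rw [Matrix.mul_add, Matrix.trace_add, Matrix.mul_smul, Matrix.mul_smul,
      Matrix.mul_one, Matrix.trace_smul, Matrix.trace_smul, hX]
    simp [Complex.real_smul, Complex.add_re, Complex.mul_re]
  have hD1 : qRelEnt σ ρ = (-α) * (Matrix.trace (σ * G)).re + (-Real.log cR) := by
    have hsub : mlog σ - mlog ρ = (-α) • G + (-Real.log cR) • (1 : Mat d) := by
      rw [hσlog, hHdef]
      simp only [neg_smul]
      abel
    rw [qRelEnt, trEnt_eq hσpos.1, ← Complex.sub_re, ← Matrix.trace_sub, ← Matrix.mul_sub,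
      hsub, htr σ hσtr G (-α) (-Real.log cR)]
  have hD2 : qRelEnt ρ σ = α * (Matrix.trace (ρ * G)).re + Real.log cR := by
    have hsub : mlog ρ - mlog σ = α • G + (Real.log cR) • (1 : Mat d) := by
      rw [hσlog, hHdef]
      abel
    rw [qRelEnt, trEnt_eq hρ.1, ← Complex.sub_re, ← Matrix.trace_sub, ← Matrix.mul_sub,
      hsub, htr ρ hρ1 G α (Real.log cR)]
  refine ⟨hσpos, hσtr, ?_⟩
  rw [hD1, hD2]
  ring

lemma klein {d : ℕ} {σ ρ : Mat d} (hσ : σ.PosSemidef) (hσ1 : σ.trace = 1)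
    (hρ : ρ.PosDef) (hρ1 : ρ.trace = 1) : 0 ≤ qRelEnt σ ρ := by
  classical
  have hσh : σ.IsHermitian := hσ.1
  have hρh : ρ.IsHermitian := hρ.1
  set lam : Fin d → ℝ := hσh.eigenvalues with hlam
  set mu : Fin d → ℝ := hρh.eigenvalues with hmu
  have hlam0 : ∀ i, 0 ≤ lam i := hσ.eigenvalues_nonneg
  have hmu0 : ∀ j, 0 < mu j := hρ.eigenvalues_pos
  have hsum_lam : ∑ i, lam i = 1 := by
    have h := trace_cfc' hσh id
    rw [cfc_id ℝ σ hσh.isSelfAdjoint, hσ1] at h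
    have h2 := congrArg Complex.re h
    rw [re_sum_ofReal] at h2
    simpa using h2.symm
  have hsum_mu : ∑ j, mu j = 1 := by
    have h := trace_cfc' hρh id
    rw [cfc_id ℝ ρ hρh.isSelfAdjoint, hρ1] at h
    have h2 := congrArg Complex.re h
    rw [re_sum_ofReal] at h2
    simpa using h2.symm
  have hent : trEnt σ = ∑ i, lam i * Real.log (lam i) := by
    rw [trEnt, trace_cfc' hσh, re_sum_ofReal]
  set U : Mat d := (Matrix.IsHermitian.eigenvectorUnitary hσh : Mat d) with hU
  set V : Mat d := (Matrix.IsHermitian.eigenvectorUnitary hρh : Mat d) with hV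
  set W : Mat d := star U * V with hW
  set p : Fin d → Fin d → ℝ := fun i j => Complex.normSq (W i j) with hp
  have hUU : U * star U = 1 :=
    Matrix.mem_unitaryGroup_iff.mp (Matrix.IsHermitian.eigenvectorUnitary hσh).2
  have hVV : V * star V = 1 :=
    Matrix.mem_unitaryGroup_iff.mp (Matrix.IsHermitian.eigenvectorUnitary hρh).2
  have hUU' : star U * U = 1 :=
    Matrix.mem_unitaryGroup_iff'.mp (Matrix.IsHermitian.eigenvectorUnitary hσh).2
  have hVV' : star V * V = 1 :=
    Matrix.mem_unitaryGroup_iff'.mp (Matrix.IsHermitian.eigenvectorUnitary hρh).2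
  have hWW : W * star W = 1 := by
    rw [hW, star_mul, star_star, mul_assoc (star U) V, ← mul_assoc V (star V) U, hVV,
      one_mul, hUU']
  have hWW' : star W * W = 1 := by
    rw [hW, star_mul, star_star, mul_assoc (star V) U, ← mul_assoc U (star U) V, hUU,
      one_mul, hVV']
  have hrow : ∀ i, ∑ j, p i j = 1 := by
    intro i
    have h1 := congrArg (fun M : Mat d => M i i) hWW
    simp only [Matrix.mul_apply, Matrix.star_apply, Matrix.one_apply_eq, RCLike.star_def,
      Complex.mul_conj] at h1
    exact_mod_cast h1
  have hcol : ∀ j, ∑ i, p i j = 1 := by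
    intro j
    have h1 := congrArg (fun M : Mat d => M j j) hWW'
    simp only [Matrix.mul_apply, Matrix.star_apply, Matrix.one_apply_eq,
      RCLike.star_def] at h1
    have h2 : ∑ i, ((p i j : ℝ) : ℂ) = 1 := by
      rw [← h1]
      exact Finset.sum_congr rfl fun i _ => by rw [mul_comm, Complex.mul_conj]
    exact_mod_cast h2
  have hmix : (Matrix.trace (σ * mlog ρ)).re = ∑ i, ∑ j, lam i * (Real.log (mu j) * p i j) := by
    have hσdec : σ = U * Matrix.diagonal (RCLike.ofReal ∘ lam) * star U := hσh.spectral_theorem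
    have hlogρ : mlog ρ = V * Matrix.diagonal (RCLike.ofReal ∘ (Real.log ∘ mu)) * star V := by
      rw [mlog, hρh.cfc_eq, Matrix.IsHermitian.cfc, Unitary.conjStarAlgAut_apply]
    set A : Mat d := Matrix.diagonal (RCLike.ofReal ∘ lam) with hA
    set B : Mat d := Matrix.diagonal (RCLike.ofReal ∘ (Real.log ∘ mu)) with hB
    have e1 : σ * mlog ρ = U * (A * star U * (V * B * star V)) := by
      rw [hσdec, hlogρ]
      simp only [Matrix.mul_assoc]
    have e2 : Matrix.trace (σ * mlog ρ) = Matrix.trace (A * (W * (B * star W))) := by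
      rw [e1, Matrix.trace_mul_comm]
      congr 1
      rw [hW, star_mul, star_star]
      simp only [Matrix.mul_assoc]
    rw [e2]
    have e3 : Matrix.trace (A * (W * (B * star W)))
        = ∑ i, ∑ j, ((lam i * (Real.log (mu j) * p i j) : ℝ) : ℂ) := by
      rw [Matrix.trace]
      congr 1
      funext i
      rw [Matrix.diag_apply, hA, Matrix.diagonal_mul, Matrix.mul_apply]
      rw [Finset.mul_sum]
      congr 1
      funext j
      rw [hB, Matrix.diagonal_mul, Matrix.star_apply, RCLike.star_def]
      simp only [Function.comp_apply, RCLike.ofReal, hp]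
      rw [mul_left_comm (W i j), Complex.mul_conj]
      simp only [show (RCLike.ofReal : ℝ → ℂ) = Complex.ofReal from rfl]
      push_cast
      ring
    rw [e3, Complex.re_sum]
    congr 1
    funext i
    rw [Complex.re_sum]
    simp
  -- Jensen and pointwise bounds
  set r : Fin d → ℝ := fun i => ∑ j, p i j * mu j with hr
  have hp0 : ∀ i j, 0 ≤ p i j := fun i j => Complex.normSq_nonneg _
  have hrpos : ∀ i, 0 < r i := by
    intro i
    have h0 : 0 ≤ r i := Finset.sum_nonneg fun j _ => mul_nonneg (hp0 i j) (hmu0 j).le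
    rcases h0.lt_or_eq with h | h
    · exact h
    · exfalso
      have hall := (Finset.sum_eq_zero_iff_of_nonneg
        (fun j (_ : j ∈ Finset.univ) => mul_nonneg (hp0 i j) (hmu0 j).le)).mp h.symm
      have hz : ∑ j, p i j = 0 := Finset.sum_eq_zero fun j _ => by
        rcases mul_eq_zero.mp (hall j (Finset.mem_univ j)) with h' | h'
        · exact h'
        · exact absurd h' (hmu0 j).ne'
      rw [hrow i] at hz
      norm_num at hz
  have hjensen : ∀ i, ∑ j, p i j * Real.log (mu j) ≤ Real.log (r i) := by
    intro i
    have h := (strictConcaveOn_log_Ioi.concaveOn).le_map_sum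
      (fun j (_ : j ∈ Finset.univ) => hp0 i j) (hrow i) (fun j _ => hmu0 j)
    simpa [smul_eq_mul] using h
  have hpoint : ∀ i, lam i - r i ≤ lam i * Real.log (lam i) - lam i * Real.log (r i) := by
    intro i
    rcases (hlam0 i).lt_or_eq with hl | hl
    · have hlog := Real.log_le_sub_one_of_pos (div_pos (hrpos i) hl)
      rw [Real.log_div (hrpos i).ne' hl.ne'] at hlog
      have h2 := mul_le_mul_of_nonneg_left hlog hl.le
      have h3 : lam i * (r i / lam i - 1) = r i - lam i := by
        field_simp
      nlinarith
    · rw [← hl]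
      simp
      exact (hrpos i).le
  have hsum_r : ∑ i, r i = 1 := by
    rw [hr]
    rw [Finset.sum_comm]
    calc ∑ j, ∑ i, p i j * mu j = ∑ j, (∑ i, p i j) * mu j := by
          simp [Finset.sum_mul]
      _ = ∑ j, mu j := by
          refine Finset.sum_congr rfl fun j _ => by rw [hcol j, one_mul]
      _ = 1 := hsum_mu
  have step1 : ∀ i, ∑ j, lam i * (Real.log (mu j) * p i j) ≤ lam i * Real.log (r i) := by
    intro i
    have : ∑ j, lam i * (Real.log (mu j) * p i j)
        = lam i * ∑ j, p i j * Real.log (mu j) := by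
      rw [Finset.mul_sum]
      exact Finset.sum_congr rfl fun j _ => by ring
    rw [this]
    exact mul_le_mul_of_nonneg_left (hjensen i) (hlam0 i)
  have hfinal : ∑ i, (lam i - r i) ≤ qRelEnt σ ρ := by
    rw [qRelEnt, hent, hmix]
    have h1 : ∑ i, ∑ j, lam i * (Real.log (mu j) * p i j) ≤ ∑ i, lam i * Real.log (r i) :=
      Finset.sum_le_sum fun i _ => step1 i
    have h2 : ∑ i, (lam i - r i) ≤ ∑ i, (lam i * Real.log (lam i) - lam i * Real.log (r i)) :=
      Finset.sum_le_sum fun i _ => hpoint i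
    simp only [Finset.sum_sub_distrib] at h2 ⊢
    linarith
  rw [Finset.sum_sub_distrib, hsum_lam, hsum_r] at hfinal
  linarith


/-- `f` is (Fréchet) differentiable at `x` with gradient `g`, with respect to the real
inner product `Re tr (Xᴴ Y)`: the derivative is `V ↦ Re tr (gᴴ V)`. -/
def HasMatGradientAt {d : ℕ} (f : Mat d → ℝ) (g : Mat d) (x : Mat d) : Prop :=
  ∃ L : Mat d →L[ℝ] ℝ, HasFDerivAt f L x ∧ ∀ V : Mat d, L V = (Matrix.trace (gᴴ * V)).re

/-- if the Armijo condition holds at step size `α`, then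
`f(ρ) - f(ρ(α)) ≥ τ α⁻¹ D(ρ(α), ρ) ≥ 0`; in particular `f(ρ(α)) ≤ f(ρ)`. -/
theorem stmt_12 {d : ℕ} (hd : 0 < d) (U : Set (Mat d)) (hUopen : IsOpen U)
    (f : Mat d → ℝ) (f' : Mat d → Mat d)
    (hgrad : ∀ x ∈ U, HasMatGradientAt f (f' x) x)
    (hherm : ∀ x ∈ U, (f' x).IsHermitian)
    (ρ : Mat d) (hρU : ρ ∈ U) (hρ : ρ.PosDef) (hρ1 : ρ.trace = 1)
    (α τ : ℝ) (hα : 0 < α) (hτ : τ ∈ Set.Ioc (0:ℝ) 1)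
    (hmem : egStep ρ (f' ρ) α ∈ U)
    (harmijo : f (egStep ρ (f' ρ) α) ≤
      f ρ + τ * hsInner (f' ρ) (egStep ρ (f' ρ) α - ρ)) :
    f ρ - f (egStep ρ (f' ρ) α) ≥ τ * α⁻¹ * qRelEnt (egStep ρ (f' ρ) α) ρ ∧
      0 ≤ τ * α⁻¹ * qRelEnt (egStep ρ (f' ρ) α) ρ ∧
      f (egStep ρ (f' ρ) α) ≤ f ρ := by
  have hG : (f' ρ).IsHermitian := hherm ρ hρU
  obtain ⟨hσpos, hσtr, hsum⟩ := egStep_key hd ρ (f' ρ) hρ hρ1 hG α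
  set σ := egStep ρ (f' ρ) α with hσdef
  have K1 : 0 ≤ qRelEnt σ ρ := klein hσpos.posSemidef hσtr hρ hρ1
  have K2 : 0 ≤ qRelEnt ρ σ := klein hρ.posSemidef hρ1 hσpos hσtr
  set X : ℝ := (Matrix.trace (ρ * f' ρ)).re - (Matrix.trace (σ * f' ρ)).re with hX
  have hin : hsInner (f' ρ) (σ - ρ) = -X := by
    simp only [hsInner, hG.eq, Matrix.mul_sub, Matrix.trace_sub, Complex.sub_re, hX]
    rw [Matrix.trace_mul_comm (f' ρ) σ, Matrix.trace_mul_comm (f' ρ) ρ]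
    ring
  have hτ0 : 0 < τ := hτ.1
  have hXle : qRelEnt σ ρ ≤ α * X := by linarith
  have h4 : α⁻¹ * qRelEnt σ ρ ≤ α⁻¹ * (α * X) :=
    mul_le_mul_of_nonneg_left hXle (inv_pos.2 hα).le
  have h5 : α⁻¹ * (α * X) = X := by field_simp
  have h6 : τ * (α⁻¹ * qRelEnt σ ρ) ≤ τ * X :=
    mul_le_mul_of_nonneg_left (h5 ▸ h4) hτ0.le
  have h7 : τ * hsInner (f' ρ) (σ - ρ) = -(τ * X) := by rw [hin]; ring
  have h8 : 0 ≤ τ * α⁻¹ * qRelEnt σ ρ :=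
    mul_nonneg (mul_nonneg hτ0.le (inv_pos.2 hα).le) K1
  have h9 : τ * α⁻¹ * qRelEnt σ ρ = τ * (α⁻¹ * qRelEnt σ ρ) := by ring
  have main : τ * α⁻¹ * qRelEnt σ ρ ≤ f ρ - f σ := by
    calc τ * α⁻¹ * qRelEnt σ ρ = τ * (α⁻¹ * qRelEnt σ ρ) := h9
      _ ≤ τ * X := h6
      _ = -(τ * hsInner (f' ρ) (σ - ρ)) := by rw [h7, neg_neg]
      _ ≤ f ρ - f σ := by linarith [harmijo]
  exact ⟨main, h8, by linarith [main, h8]⟩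

end
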